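/- arXiv:2103.14747 — 2 statements merged into one kernel-verified Lean document; each statement's English description precedes it below -/
import Mathlib

section
/- Let $a, b$ be complex numbers with $|a/b| < 1$ and $|b| \geq 2$. Then $b\left[1 - \left(1 - \frac{a}{b}\right)\left(1 - \frac{1}{b}\right)^{-a}\right] = \frac{a(a-1)}{b}\left[\frac{1}{2} + \sum_{n=1}^{\infty} \frac{(a+1)(a+2)\cdots(a+n)}{b^n (n+1)!} \cdot \frac{n+1}{n+2}\right]$, where $(1-1/b)^{-a} = \exp(-a \log(1 - 1/b))$ using the principal branch of the logarithm. -/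
/-!
With `c n = a (a + 1) ⋯ (a + n - 1) / n!`, the binomial series gives
`(1 - 1/b)^(-a) = ∑ c n / b ^ n` for `|b| > 1`. Multiplying by `1 - a/b` and by `b`
telescopes the left-hand side into `∑ (a c n - c (n + 1)) / b ^ n`, and
`a c n - c (n + 1) = c n · n (a - 1) / (n + 1)`: the term `n = 0` vanishes, the term `n = 1`
is `a (a - 1) / (2 b)`, and the term `n = m + 2` is `a (a - 1) / b` times the `m`-th summand
on the right.
-/

open Finset Complex
open scoped Nat

lemma Polynomial.ascPochhammer_eval_eq_prod_range {R : Type*} [CommSemiring R] (n : ℕ) (r : R) :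
    (ascPochhammer R n).eval r = ∏ k ∈ range n, (r + k) := by
  induction n with
  | zero => simp
  | succ n ih => simp [ascPochhammer_succ_right, ih, prod_range_succ]

lemma Ring.choose_add_sub_one_eq_prod_div {K : Type*} [Field K] [CharZero K] (a : K) (n : ℕ) :
    Ring.choose (a + n - 1) n = (∏ k ∈ range n, (a + k)) / n ! := by
  rw [← Ring.multichoose_eq, eq_div_iff (Nat.cast_ne_zero.mpr n.factorial_ne_zero), mul_comm,
    ← nsmul_eq_mul, Ring.factorial_nsmul_multichoose_eq_ascPochhammer,
    Polynomial.ascPochhammer_smeval_eq_eval, Polynomial.ascPochhammer_eval_eq_prod_range]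

theorem Complex.hasSum_prod_div_factorial_mul_pow (a : ℂ) {z : ℂ} (hz : ‖z‖ < 1) :
    HasSum (fun n ↦ (∏ k ∈ range n, (a + k)) / n ! * z ^ n) (exp (-a * log (1 - z))) := by
  have hz' : z ∈ Metric.eball (0 : ℂ) 1 := by
    rw [← ENNReal.ofReal_one, Metric.eball_ofReal]; simpa using hz
  have h1z : 1 - z ≠ 0 := by
    intro h; rw [sub_eq_zero] at h; simp [← h] at hz
  have := (one_div_one_sub_cpow_hasFPowerSeriesOnBall_zero a).hasSum hz'
  simp only [FormalMultilinearSeries.ofScalars_apply_eq, smul_eq_mul, zero_add,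
    Ring.choose_add_sub_one_eq_prod_div] at this
  rw [neg_mul, mul_comm a]
  rwa [cpow_def_of_ne_zero h1z, one_div, ← exp_neg] at this

theorem HasSum.mul_sub_shift_div_pow {K : Type*} [Field K] [TopologicalSpace K]
    [IsTopologicalRing K] {c : ℕ → K} {b F : K} (hF : HasSum (fun n ↦ c n / b ^ n) F)
    (a : K) (hb : b ≠ 0) :
    HasSum (fun n ↦ (a * c n - c (n + 1)) / b ^ n) (b * (c 0 - (1 - a / b) * F)) := by
  have hshift : HasSum (fun n ↦ c (n + 1) / b ^ (n + 1)) (F - c 0) := by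
    simpa using (hasSum_nat_add_iff' (f := fun n ↦ c n / b ^ n) 1).mpr hF
  have hterm : (fun n ↦ a * (c n / b ^ n) - b * (c (n + 1) / b ^ (n + 1))) =
      fun n ↦ (a * c n - c (n + 1)) / b ^ n := by
    ext n; field_simp; ring
  have hsum : a * F - b * (F - c 0) = b * (c 0 - (1 - a / b) * F) := by field_simp; ring
  simpa only [hterm, hsum] using (hF.mul_left a).sub (hshift.mul_left b)

lemma mul_prod_div_factorial_sub_div_pow {K : Type*} [Field K] [CharZero K] (a : K) {b : K}
    (hb : b ≠ 0) (m : ℕ) :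
    (a * ((∏ k ∈ range (m + 2), (a + k)) / (m + 2)!) - (∏ k ∈ range (m + 3), (a + k)) / (m + 3)!)
        / b ^ (m + 2) =
      a * (a - 1) / b * ((∏ k ∈ range (m + 1), (a + ((k : K) + 1))) / (b ^ (m + 1) * (m + 2)!) *
        (((m : K) + 2) / ((m : K) + 3))) := by
  rw [prod_range_succ _ (m + 2), prod_range_succ' _ (m + 1), Nat.factorial_succ (m + 2)]
  have hm : (m : K) + 3 ≠ 0 := by norm_cast
  have hfact : ((m + 2)! : K) ≠ 0 := Nat.cast_ne_zero.mpr (Nat.factorial_ne_zero _)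
  push_cast
  rw [add_zero, show (m : K) + 2 + 1 = m + 3 by ring]
  field_simp
  ring

theorem stmt0_general (a b : ℂ) (h2 : 2 ≤ ‖b‖) :
    b * (1 - (1 - a / b) * Complex.exp (-a * Complex.log (1 - 1 / b))) =
      a * (a - 1) / b *
        (1 / 2 + ∑' n : ℕ,
          (∏ k ∈ Finset.range (n + 1), (a + ((k : ℂ) + 1))) /
              (b ^ (n + 1) * ((n + 2).factorial : ℂ)) * (((n : ℂ) + 2) / ((n : ℂ) + 3))) := by
  have hb : b ≠ 0 := norm_pos_iff.mp (by linarith)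
  have hz : ‖1 / b‖ < 1 := by rw [norm_div, norm_one, div_lt_one (by linarith)]; linarith
  have hseries := hasSum_prod_div_factorial_mul_pow a hz
  simp only [one_div_pow, mul_one_div] at hseries
  have htel := hseries.mul_sub_shift_div_pow a hb
  rw [prod_range_zero, Nat.factorial_zero, Nat.cast_one, div_one] at htel
  rw [← htel.tsum_eq, ← htel.summable.sum_add_tsum_nat_add 2,
    tsum_congr (mul_prod_div_factorial_sub_div_pow a hb), tsum_mul_left, mul_add]
  congr 1
  simp only [sum_range_succ, sum_range_zero, prod_range_succ, prod_range_zero, Nat.factorial]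
  push_cast
  field_simp
  ring

/-- Williams' identity (Lemma 2.4 of the paper): for complex `a, b` with `|a/b| < 1` and
`|b| ≥ 2`, using the principal power `(1 - 1/b)^(-a) = exp(-a log(1 - 1/b))`. -/
theorem stmt0 (a b : ℂ) (h1 : ‖a / b‖ < 1) (h2 : 2 ≤ ‖b‖) :
    b * (1 - (1 - a / b) * Complex.exp (-a * Complex.log (1 - 1 / b))) =
      a * (a - 1) / b *
        (1 / 2 + ∑' n : ℕ,
          (∏ k ∈ Finset.range (n + 1), (a + ((k : ℂ) + 1))) /
              (b ^ (n + 1) * ((n + 2).factorial : ℂ)) * (((n : ℂ) + 2) / ((n : ℂ) + 3))) :=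
  stmt0_general a b h2
end

section
/- Let $d \geq 1$ be an integer and let $a, b$ be complex numbers with $|a| \leq d$ and $b$ a real number with $b \geq d + 1$ (so $|a/b| < 1$). Define $k = b\left[1 - \left(1 - \frac{a}{b}\right)\left(1 - \frac{1}{b}\right)^{-a}\right]$. Then $|k| \leq \frac{d(d+1)}{2} \cdot \frac{1}{b} + \frac{C_d}{b^2}$, where $C_d = \frac{d(d+1)}{d!} \sum_{n=0}^{\infty} \frac{(n-1+d)!}{n!} \cdot \frac{1}{2^n}$. -/
/-!
Put `x = 1/b`. The principal power is `(1 - x)^(-a) = exp (a x) * exp (a ℓ)` with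
`ℓ = -log (1 - x) - x ∈ [0, x² / (2 (1 - x))]`, so `k / b = 1 - (1 - u) exp (a ℓ)` where
`u = 1 - (1 - a x) exp (a x)`. The Taylor series of `u` and of `exp w - 1` have nonnegative
coefficients, hence their norms are bounded by the same functions of `‖a‖ x` and `‖a ℓ‖`. This gives
the real majorant `‖k‖ ≤ b ((1 + φ(‖a‖ x)) exp (‖a‖ ℓ) - 1)` with `φ t = 1 - (1 - t) eᵗ`, whose
expansion to third order in `x`, using `‖a‖ ≤ d` and `(d + 1) x ≤ 1`, is at most
`d (d + 1) x² / 2 + (d + 1) (d² + d + 2) x³ / 2`. Finally `d² + d + 2 ≤ 2^(d+1)`, while the series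
defining `C_d` sums to `(d - 1)! 2^d`, so that `C_d = (d + 1) 2^d`.
-/

open Real
open scoped Nat

theorem hasSum_one_sub_one_sub_mul_exp {𝔸 : Type*} [NormedField 𝔸] [NormedAlgebra ℚ 𝔸]
    [CompleteSpace 𝔸] (x : 𝔸) :
    HasSum (fun n : ℕ => (n / (n + 1)! : 𝔸) * x ^ (n + 1))
      (1 - (1 - x) * NormedSpace.exp x) := by
  have := algebraRat.charZero 𝔸
  have hexp := NormedSpace.expSeries_div_hasSum_exp x
  have hmul : HasSum (fun n : ℕ => x ^ (n + 1) / n !) (x * NormedSpace.exp x) := by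
    simpa only [pow_succ', mul_div_assoc] using hexp.mul_left x
  have htail : HasSum (fun n : ℕ => x ^ (n + 1) / (n + 1)!) (NormedSpace.exp x - 1) := by
    simpa using (hasSum_nat_add_iff' 1).2 hexp
  rw [show 1 - (1 - x) * NormedSpace.exp x = x * NormedSpace.exp x - (NormedSpace.exp x - 1) by
    ring]
  refine (hmul.sub htail).congr_fun fun n => ?_
  rw [Nat.factorial_succ]
  push_cast
  field_simp
  ring

theorem norm_one_sub_one_sub_mul_cexp_self_le (z : ℂ) :
    ‖1 - (1 - z) * Complex.exp z‖ ≤ 1 - (1 - ‖z‖) * exp ‖z‖ := by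
  rw [Complex.exp_eq_exp_ℂ, Real.exp_eq_exp_ℝ]
  refine (hasSum_one_sub_one_sub_mul_exp z).norm_le_of_bounded
    (hasSum_one_sub_one_sub_mul_exp ‖z‖) fun n => ?_
  simp

theorem one_sub_one_sub_mul_exp_le {t : ℝ} (ht0 : 0 ≤ t) (ht1 : t ≤ 1) :
    1 - (1 - t) * exp t ≤ t ^ 2 / 2 + t ^ 3 / 2 := by
  nlinarith [mul_le_mul_of_nonneg_left (quadratic_le_exp_of_nonneg ht0) (sub_nonneg.2 ht1)]

theorem norm_one_sub_one_sub_mul_cexp_le (u w : ℂ) :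
    ‖1 - (1 - u) * Complex.exp w‖ ≤ (1 + ‖u‖) * exp ‖w‖ - 1 := by
  have hexp : ‖Complex.exp w - 1‖ ≤ exp ‖w‖ - 1 := by
    simpa using Complex.norm_exp_sub_sum_le_exp_norm_sub_sum w 1
  calc ‖1 - (1 - u) * Complex.exp w‖ = ‖u * Complex.exp w - (Complex.exp w - 1)‖ := by ring_nf
    _ ≤ ‖u‖ * exp ‖w‖ + (exp ‖w‖ - 1) := by
      grw [norm_sub_le, norm_mul, Complex.norm_exp_le_exp_norm, hexp]
    _ = (1 + ‖u‖) * exp ‖w‖ - 1 := by ring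

theorem neg_log_one_sub_sub_self_nonneg {x : ℝ} (hx1 : x < 1) : 0 ≤ -log (1 - x) - x := by
  linarith [log_le_sub_one_of_pos (sub_pos.2 hx1)]

theorem neg_log_one_sub_sub_self_le {x : ℝ} (hx0 : 0 ≤ x) (hx1 : x < 1) :
    -log (1 - x) - x ≤ x ^ 2 / (2 * (1 - x)) := by
  have hlog := hasSum_pow_div_log_of_abs_lt_one (abs_lt.2 ⟨by linarith, hx1⟩)
  have htail : HasSum (fun n : ℕ => x ^ (n + 2) / (n + 2)) (-log (1 - x) - x) := by
    have := (hasSum_nat_add_iff' 1).2 hlog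
    simp only [Finset.sum_range_one] at this
    norm_num at this
    refine this.congr_fun fun n => ?_
    ring_nf
  have hgeom : HasSum (fun n : ℕ => x ^ (n + 2) / 2) (x ^ 2 / (2 * (1 - x))) := by
    have := (hasSum_geometric_of_lt_one hx0 hx1).mul_left (x ^ 2 / 2)
    rw [show x ^ 2 / 2 * (1 - x)⁻¹ = x ^ 2 / (2 * (1 - x)) by field_simp] at this
    exact this.congr_fun fun n => by ring
  refine hasSum_le (fun n => ?_) htail hgeom
  gcongr
  linarith [n.cast_nonneg (α := ℝ)]

noncomputable def kMajorant (A x : ℝ) : ℝ :=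
  (1 + (1 - (1 - A * x) * exp (A * x))) * exp (A * (x ^ 2 / (2 * (1 - x)))) - 1

theorem norm_one_sub_one_sub_mul_cexp_neg_mul_log_le (a : ℂ) {x : ℝ} (hx0 : 0 ≤ x)
    (hx1 : x < 1) :
    ‖1 - (1 - a * x) * Complex.exp (-a * Complex.log (1 - x))‖ ≤ kMajorant ‖a‖ x := by
  set ℓ := -log (1 - x) - x with hℓ
  have hsplit : -a * Complex.log (1 - x) = a * x + a * ℓ := by
    rw [← Complex.ofReal_one, ← Complex.ofReal_sub, ← Complex.ofReal_log (by linarith), hℓ]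
    push_cast
    ring
  have hz : ‖a * (x : ℂ)‖ = ‖a‖ * x := by simp [abs_of_nonneg hx0]
  have hw : ‖a * (ℓ : ℂ)‖ = ‖a‖ * ℓ := by
    rw [norm_mul, Complex.norm_real, norm_of_nonneg (neg_log_one_sub_sub_self_nonneg hx1)]
  have hu : ‖1 - (1 - a * x) * Complex.exp (a * x)‖ ≤ 1 - (1 - ‖a‖ * x) * exp (‖a‖ * x) := by
    simpa only [hz] using norm_one_sub_one_sub_mul_cexp_self_le (a * x)
  have hw' : ‖a * (ℓ : ℂ)‖ ≤ ‖a‖ * (x ^ 2 / (2 * (1 - x))) := by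
    rw [hw]
    gcongr
    exact neg_log_one_sub_sub_self_le hx0 hx1
  rw [hsplit, Complex.exp_add,
    show ∀ u v w : ℂ, 1 - u * (v * w) = 1 - (1 - (1 - u * v)) * w by intros; ring]
  refine (norm_one_sub_one_sub_mul_cexp_le _ _).trans ?_
  unfold kMajorant
  gcongr
  linarith [norm_nonneg (1 - (1 - a * x) * Complex.exp (a * x))]

theorem majorant_poly_le {D x : ℝ} (hD : 1 ≤ D) (hx : 0 < x) (hxD : (D + 1) * x ≤ 1) :
    (1 + ((D * x) ^ 2 / 2 + (D * x) ^ 3 / 2)) *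
        (1 + (D * x ^ 2 / 2 + (D + 1) * x ^ 3 / 2) + (D * x ^ 2 / 2 + (D + 1) * x ^ 3 / 2) ^ 2) - 1 ≤
      D * (D + 1) / 2 * x ^ 2 + (D + 1) * (D ^ 2 + D + 2) / 2 * x ^ 3 := by
  set Δ := D * x ^ 2 / 2 + (D + 1) * x ^ 3 / 2 with hΔ
  set M := (D * x) ^ 2 / 2 + (D * x) ^ 3 / 2 with hM
  have hΔ0 : 0 ≤ Δ := by positivity
  have hΔx : Δ ≤ (D + 1) * x ^ 2 / 2 := by nlinarith
  have hΔhalf : Δ ≤ x / 2 := by nlinarith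
  have hΔsq : Δ ^ 2 ≤ (D + 1) * x ^ 3 / 4 := by
    calc Δ ^ 2 = Δ * Δ := sq Δ
      _ ≤ (D + 1) * x ^ 2 / 2 * (x / 2) := mul_le_mul hΔx hΔhalf hΔ0 (by positivity)
      _ = (D + 1) * x ^ 3 / 4 := by ring
  have hΔ2 : Δ + Δ ^ 2 ≤ 5 / 8 * (D + 1) * x ^ 2 := by nlinarith
  have hM0 : 0 ≤ M := by positivity
  have hM' : M ≤ D ^ 2 * x ^ 2 := by nlinarith
  have hMΔ : M * (Δ + Δ ^ 2) ≤ 5 / 8 * D ^ 2 * x ^ 3 := by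
    calc M * (Δ + Δ ^ 2) ≤ D ^ 2 * x ^ 2 * (5 / 8 * (D + 1) * x ^ 2) := by gcongr
      _ = 5 / 8 * D ^ 2 * x ^ 3 * ((D + 1) * x) := by ring
      _ ≤ 5 / 8 * D ^ 2 * x ^ 3 := mul_le_of_le_one_right (by positivity) hxD
  have hrest : 0 ≤ (3 * D ^ 2 / 8 + 3 * D / 4 + 1 / 4) * x ^ 3 := by positivity
  -- the `x²` terms of `M + Δ` are exactly the claimed ones; all the rest is `O(x³)`
  rw [show (1 + M) * (1 + Δ + Δ ^ 2) - 1 = M + Δ + Δ ^ 2 + M * (Δ + Δ ^ 2) by ring]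
  linarith

theorem kMajorant_le {A D x : ℝ} (hA0 : 0 ≤ A) (hAD : A ≤ D) (hD : 1 ≤ D) (hx : 0 < x)
    (hxD : (D + 1) * x ≤ 1) :
    kMajorant A x ≤ D * (D + 1) / 2 * x ^ 2 + (D + 1) * (D ^ 2 + D + 2) / 2 * x ^ 3 := by
  have hx1 : x < 1 := by nlinarith
  have hφ : 1 - (1 - A * x) * exp (A * x) ≤ (D * x) ^ 2 / 2 + (D * x) ^ 3 / 2 := by
    refine (one_sub_one_sub_mul_exp_le (by positivity) (by nlinarith)).trans ?_
    gcongr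
  have hδ : A * (x ^ 2 / (2 * (1 - x))) ≤ D * x ^ 2 / 2 + (D + 1) * x ^ 3 / 2 := by
    have := sub_pos.2 hx1
    calc A * (x ^ 2 / (2 * (1 - x))) ≤ D * (x ^ 2 / (2 * (1 - x))) := by gcongr
      _ ≤ D * x ^ 2 / 2 + (D + 1) * x ^ 3 / 2 := by
        rw [mul_div_assoc', div_le_iff₀ (by positivity)]
        nlinarith [mul_nonneg (pow_pos hx 3).le (sub_nonneg.2 hxD)]
  set δ := A * (x ^ 2 / (2 * (1 - x)))
  set Δ := D * x ^ 2 / 2 + (D + 1) * x ^ 3 / 2 with hΔ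
  have hδ0 : 0 ≤ δ := by have := sub_pos.2 hx1; positivity
  have hΔ1 : Δ ≤ 1 := by
    have : (D + 1) * x ^ 2 ≤ x := by nlinarith
    nlinarith [pow_pos hx 3]
  have hexp : exp δ ≤ 1 + Δ + Δ ^ 2 := by
    have := (abs_le.1 (abs_exp_sub_one_sub_id_le (x := δ) (abs_le.2 ⟨by linarith, by linarith⟩))).2
    calc exp δ ≤ 1 + δ + δ ^ 2 := by linarith
      _ ≤ 1 + Δ + Δ ^ 2 := by gcongr
  calc kMajorant A x
      ≤ (1 + ((D * x) ^ 2 / 2 + (D * x) ^ 3 / 2)) * (1 + Δ + Δ ^ 2) - 1 := by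
        unfold kMajorant
        gcongr
    _ ≤ _ := majorant_poly_le hD hx hxD

theorem sq_add_self_add_two_le_two_pow (d : ℕ) : d ^ 2 + d + 2 ≤ 2 ^ (d + 1) := by
  induction d with
  | zero => norm_num
  | succ n ih =>
    have := n.lt_two_pow_self
    rw [pow_succ 2 (n + 1), pow_succ 2 n] at *
    nlinarith

theorem tsum_factorial_add_div_factorial_div_two_pow (e : ℕ) :
    ∑' n : ℕ, ((n + e)! : ℝ) / n ! / 2 ^ n = e ! * 2 ^ (e + 1) := by
  have hr : ‖(1 / 2 : ℝ)‖ < 1 := by norm_num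
  have h := (hasSum_choose_mul_geometric_of_norm_lt_one e hr).mul_left (e ! : ℝ)
  rw [show (e ! : ℝ) * (1 / (1 - 1 / 2) ^ (e + 1)) = e ! * 2 ^ (e + 1) by
    rw [show (1 : ℝ) - 1 / 2 = 2⁻¹ by norm_num, one_div, ← inv_pow, inv_inv]] at h
  refine (h.congr_fun fun n => ?_).tsum_eq
  rw [← Nat.add_choose_mul_factorial_mul_factorial n e]
  push_cast
  simp only [one_div, inv_pow]
  field_simp

theorem succ_mul_sq_add_self_add_two_div_two_le (d : ℕ) (hd : 1 ≤ d) :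
    ((d : ℝ) + 1) * (d ^ 2 + d + 2) / 2 ≤
      (d : ℝ) * (d + 1) / d ! * ∑' n : ℕ, ((n + d - 1)! : ℝ) / n ! / 2 ^ n := by
  obtain ⟨e, rfl⟩ : ∃ e, d = e + 1 := ⟨d - 1, by omega⟩
  simp only [Nat.add_sub_cancel, ← add_assoc, tsum_factorial_add_div_factorial_div_two_pow]
  have h : ((e + 1 : ℕ) : ℝ) ^ 2 + (e + 1 : ℕ) + 2 ≤ 2 * 2 ^ (e + 1) := by
    rw [← pow_succ']
    exact_mod_cast sq_add_self_add_two_le_two_pow (e + 1)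
  have hfact : ((e + 1)! : ℝ) = (e + 1 : ℕ) * e ! := by push_cast [Nat.factorial_succ]; ring
  rw [hfact]
  field_simp
  linarith

/-- Lemma 2.5 of the paper: bound on `k = b[1 - (1 - a/b)(1 - 1/b)^{-a}]` (principal power)
for `|a| ≤ d` and real `b ≥ d + 1`, with the explicit constant `C_d`. -/
theorem stmt1 (d : ℕ) (hd : 1 ≤ d) (a : ℂ) (b : ℝ)
    (ha : ‖a‖ ≤ d) (hb : (d : ℝ) + 1 ≤ b) :
    ‖(b : ℂ) * (1 - (1 - a / (b : ℂ)) *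
        Complex.exp (-a * Complex.log (1 - 1 / (b : ℂ))))‖ ≤
      (d : ℝ) * (d + 1) / 2 * (1 / b) +
        ((d : ℝ) * (d + 1) / d.factorial *
          ∑' n : ℕ, ((n + d - 1).factorial : ℝ) / (n.factorial : ℝ) / 2 ^ n) / b ^ 2 := by
  have hD : (1 : ℝ) ≤ d := by exact_mod_cast hd
  have hb0 : 0 < b := by linarith
  have hx0 : 0 < b⁻¹ := inv_pos.2 hb0
  have hxD : ((d : ℝ) + 1) * b⁻¹ ≤ 1 := by rwa [← div_eq_mul_inv, div_le_one hb0]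
  have hk : (b : ℂ) * (1 - (1 - a / b) * Complex.exp (-a * Complex.log (1 - 1 / b))) =
      b * (1 - (1 - a * (b⁻¹ : ℝ)) * Complex.exp (-a * Complex.log (1 - (b⁻¹ : ℝ)))) := by
    push_cast
    ring_nf
  calc _ = b * ‖1 - (1 - a * (b⁻¹ : ℝ)) * Complex.exp (-a * Complex.log (1 - (b⁻¹ : ℝ)))‖ := by
        rw [hk, norm_mul, Complex.norm_real, norm_of_nonneg hb0.le]
    _ ≤ b * ((d : ℝ) * (d + 1) / 2 * b⁻¹ ^ 2 + ((d : ℝ) + 1) * (d ^ 2 + d + 2) / 2 * b⁻¹ ^ 3) := by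
        gcongr
        exact (norm_one_sub_one_sub_mul_cexp_neg_mul_log_le a hx0.le (by nlinarith)).trans
          (kMajorant_le (norm_nonneg a) ha hD hx0 hxD)
    _ = (d : ℝ) * (d + 1) / 2 * (1 / b) + ((d : ℝ) + 1) * (d ^ 2 + d + 2) / 2 / b ^ 2 := by
        field_simp
    _ ≤ _ := by
        gcongr
        exact succ_mul_sq_add_self_add_two_div_two_le d hd
end
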